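/- arXiv:1208.2386 — 6 statements merged into one kernel-verified Lean document; each statement's English description precedes it below -/
import Mathlib

section
/- Let λ = [[b/2, −a], [c, −b/2]] with a, b, c ∈ ℤ, (a,c) ≠ (0,0), and let μ ∈ {0,1} with b ≡ μ (mod 2); assume λ is primitive (gcd(b/2,a,c) = 1 if μ = 0, gcd(a,b,c) = 1 if μ = 1). Let g = gcd(a,c) and choose u, v ∈ ℤ with a·v − u·c = g. Set l₁ = [[g, b·u], [b·v, −g]] and l₂ = [[0, a/g], [c/g, 0]]. Then the lattice P = L ∩ λ^⊥ (the integral trace-zero matrices B-orthogonal to λ) equals ℤ·(l₁/2) ⊕ ℤ·l₂ if μ = 0 and g is even, and equals ℤ·l₁ ⊕ ℤ·l₂ otherwise. -/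
open Matrix

/-- Membership in the lattice `L` of integral trace-zero 2×2 matrices. -/
def memL (m : Matrix (Fin 2) (Fin 2) ℚ) : Prop :=
  ∃ a b c : ℤ, m = !![(b : ℚ), (c : ℚ); -(a : ℚ), -(b : ℚ)]

/-
With `x = [[B, C], [-A, -B]]` one has `tr (x λ) = a A + b B + c C`. Write `a = g a₁`, `c = g c₁`
and `g = s h`, `b = s w`, where `s = 2` if `μ = 0` and `g` is even and `s = 1` otherwise;
primitivity of `λ` makes `h` and `w` coprime. The orthogonality condition becomes
`h (a₁ A + c₁ C) + w B = 0`, so `B = m h` and `a₁ A + c₁ C = -m w`. As `a₁ v - u c₁ = 1`, the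
solutions of the latter are `-m w (v, -u)` plus integer multiples of `(-c₁, a₁)`, which is
exactly `x = m l₁' + n l₂`.
-/

theorem IsCoprime.mul_add_mul_eq_zero_iff {R : Type*} [CommRing R] [IsDomain R] {h w : R}
    (hhw : IsCoprime h w) (hh : h ≠ 0) (X Y : R) :
    h * X + w * Y = 0 ↔ ∃ m, Y = m * h ∧ X = -(m * w) := by
  constructor
  · intro hXY
    obtain ⟨m, hm⟩ := hhw.dvd_of_dvd_mul_left (z := Y) ⟨-X, by linear_combination hXY⟩
    refine ⟨m, by rw [hm, mul_comm], mul_left_cancel₀ hh ?_⟩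
    linear_combination hXY - w * hm
  · rintro ⟨m, rfl, rfl⟩
    ring

theorem mul_add_mul_eq_iff_of_mul_sub_mul_eq_one {R : Type*} [CommRing R] {a c u v : R}
    (huv : a * v - u * c = 1) (k A C : R) :
    a * A + c * C = k ↔ ∃ n, A = k * v - n * c ∧ C = -(k * u) + n * a := by
  constructor
  · intro h
    refine ⟨u * A + v * C, ?_, ?_⟩
    · linear_combination v * h - A * huv
    · linear_combination -u * h - C * huv
  · rintro ⟨n, rfl, rfl⟩
    linear_combination k * huv

theorem isCoprime_gcd_of_gcd_gcd_eq_one {a b c : ℤ} (h : Int.gcd a (Int.gcd b c) = 1) :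
    IsCoprime (Int.gcd a c : ℤ) b := by
  rwa [Int.isCoprime_iff_gcd_eq_one, Int.gcd_assoc, Int.gcd_comm c]

theorem trace_traceZero_mul {K : Type*} [Field K] [CharZero K] (A B C a b c : K) :
    trace (!![B, C; -A, -B] * !![b / 2, -a; c, -b / 2]) = a * A + b * B + c * C := by
  simp only [trace_fin_two, mul_apply, Fin.sum_univ_two, of_apply, cons_val', cons_val_zero,
    cons_val_one, empty_val', cons_val_fin_one]
  ring
def intTraceZero (A B C : ℤ) : Matrix (Fin 2) (Fin 2) ℚ :=
  !![(B : ℚ), (C : ℚ); -(A : ℚ), -(B : ℚ)]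

def l₁Mat (g b u v : ℤ) : Matrix (Fin 2) (Fin 2) ℚ :=
  !![(g : ℚ), ((b * u : ℤ) : ℚ); ((b * v : ℤ) : ℚ), -(g : ℚ)]

def l₂Mat (a c : ℤ) : Matrix (Fin 2) (Fin 2) ℚ :=
  !![0, (a : ℚ); (c : ℚ), 0]

theorem intTraceZero_inj {A B C A' B' C' : ℤ} :
    intTraceZero A B C = intTraceZero A' B' C' ↔ A = A' ∧ B = B' ∧ C = C' := by
  simp [intTraceZero]
  tauto

theorem l₁Mat_mul (s h w u v : ℤ) : l₁Mat (s * h) (s * w) u v = (s : ℚ) • l₁Mat h w u v := by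
  simp [l₁Mat, smul_of, mul_assoc]

theorem smul_l₁Mat_add_smul_l₂Mat (h w u v a c m n : ℤ) :
    (m : ℚ) • l₁Mat h w u v + (n : ℚ) • l₂Mat a c =
      intTraceZero (-(m * (w * v)) - n * c) (m * h) (m * (w * u) + n * a) := by
  ext i j
  fin_cases i <;> fin_cases j <;> simp [l₁Mat, l₂Mat, intTraceZero]
  all_goals ring

theorem trace_intTraceZero_mul (A B C a b c : ℤ) :
    trace (intTraceZero A B C * !![(b : ℚ) / 2, -(a : ℚ); (c : ℚ), -(b : ℚ) / 2]) =
      ((a * A + b * B + c * C : ℤ) : ℚ) := by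
  push_cast
  exact trace_traceZero_mul _ _ _ _ _ _

section

variable {s h w a₁ c₁ u v : ℤ}

theorem mul_add_mul_add_mul_eq_zero_iff (hs : s ≠ 0) (hh : h ≠ 0) (hhw : IsCoprime h w)
    (huv : a₁ * v - u * c₁ = 1) (A B C : ℤ) :
    s * h * a₁ * A + s * w * B + s * h * c₁ * C = 0 ↔
      ∃ m n : ℤ, A = -(m * (w * v)) - n * c₁ ∧ B = m * h ∧ C = m * (w * u) + n * a₁ := by
  have hfactor : s * h * a₁ * A + s * w * B + s * h * c₁ * C =
      s * (h * (a₁ * A + c₁ * C) + w * B) := by ring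
  rw [hfactor, mul_eq_zero, or_iff_right hs, hhw.mul_add_mul_eq_zero_iff hh]
  simp only [mul_add_mul_eq_iff_of_mul_sub_mul_eq_one huv]
  constructor
  · rintro ⟨m, hB, n, hA, hC⟩
    exact ⟨m, n, by rw [hA]; ring, hB, by rw [hC]; ring⟩
  · rintro ⟨m, n, hA, hB, hC⟩
    exact ⟨m, hB, n, by rw [hA]; ring, by rw [hC]; ring⟩

theorem memL_and_trace_eq_zero_iff (hs : s ≠ 0) (hh : h ≠ 0) (hhw : IsCoprime h w)
    (huv : a₁ * v - u * c₁ = 1) (x : Matrix (Fin 2) (Fin 2) ℚ) :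
    (memL x ∧ trace (x * !![((s * w : ℤ) : ℚ) / 2, -((s * h * a₁ : ℤ) : ℚ);
        ((s * h * c₁ : ℤ) : ℚ), -((s * w : ℤ) : ℚ) / 2]) = 0) ↔
      ∃ m n : ℤ, x = (m : ℚ) • l₁Mat h w u v + (n : ℚ) • l₂Mat a₁ c₁ := by
  simp only [smul_l₁Mat_add_smul_l₂Mat]
  constructor
  · rintro ⟨⟨A, B, C, rfl⟩, htr⟩
    change trace (intTraceZero A B C * _) = 0 at htr
    rw [trace_intTraceZero_mul, Int.cast_eq_zero,
      mul_add_mul_add_mul_eq_zero_iff hs hh hhw huv] at htr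
    obtain ⟨m, n, rfl, rfl, rfl⟩ := htr
    exact ⟨m, n, rfl⟩
  · rintro ⟨m, n, rfl⟩
    refine ⟨⟨_, _, _, rfl⟩, ?_⟩
    rw [trace_intTraceZero_mul, Int.cast_eq_zero,
      mul_add_mul_add_mul_eq_zero_iff hs hh hhw huv]
    exact ⟨m, n, rfl, rfl, rfl⟩

theorem eq_zero_of_smul_l₁Mat_add_smul_l₂Mat_eq_zero (hh : h ≠ 0) (huv : a₁ * v - u * c₁ = 1)
    {m n : ℤ} (hmn : (m : ℚ) • l₁Mat h w u v + (n : ℚ) • l₂Mat a₁ c₁ = 0) : m = 0 ∧ n = 0 := by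
  have hzero : (0 : Matrix (Fin 2) (Fin 2) ℚ) = intTraceZero 0 0 0 := by
    simp [intTraceZero, ← Matrix.ext_iff, Fin.forall_fin_two]
  rw [smul_l₁Mat_add_smul_l₂Mat, hzero, intTraceZero_inj] at hmn
  obtain ⟨hA, hB, hC⟩ := hmn
  obtain rfl : m = 0 := (mul_eq_zero.mp hB).resolve_right hh
  exact ⟨rfl, by linear_combination v * hC + u * hA - n * huv⟩

end

theorem exists_coprime_l₁Mat_eq {μ b g : ℤ} (hμ : μ = 0 ∨ μ = 1) (hbμ : b % 2 = μ % 2)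
    (hprim0 : μ = 0 → IsCoprime (b / 2) g) (hprim1 : μ = 1 → IsCoprime g b) (u v : ℤ) :
    ∃ s h w : ℤ, s ≠ 0 ∧ g = s * h ∧ b = s * w ∧ IsCoprime h w ∧
      (if μ = 0 ∧ Even g then (1 / 2 : ℚ) • l₁Mat g b u v else l₁Mat g b u v) = l₁Mat h w u v := by
  have hb2 : μ = 0 → 2 ∣ b := fun h0 => Int.dvd_of_emod_eq_zero (by rw [hbμ, h0]; rfl)
  by_cases hcase : μ = 0 ∧ Even g
  · obtain ⟨h0, hgeven⟩ := hcase
    obtain ⟨h, rfl⟩ := even_iff_two_dvd.mp hgeven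
    obtain ⟨w, rfl⟩ := hb2 h0
    have hcop := hprim0 h0
    rw [Int.mul_ediv_cancel_left _ two_ne_zero] at hcop
    refine ⟨2, h, w, two_ne_zero, rfl, rfl, hcop.symm.of_mul_left_right, ?_⟩
    rw [if_pos ⟨h0, hgeven⟩, l₁Mat_mul]
    simp
  · refine ⟨1, g, b, one_ne_zero, (one_mul g).symm, (one_mul b).symm, ?_, if_neg hcase⟩
    rcases hμ with h0 | h1
    · obtain ⟨w, rfl⟩ := hb2 h0
      have hodd : Odd g := Int.not_even_iff_odd.mp fun he => hcase ⟨h0, he⟩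
      have hcop := hprim0 h0
      rw [Int.mul_ediv_cancel_left _ two_ne_zero] at hcop
      exact (Int.isCoprime_two_right.mpr hodd).mul_right hcop.symm
    · exact hprim1 h1

/-- description of the lattice `P = L ∩ λ^⊥` as `ℤ·(l₁/2) ⊕ ℤ·l₂`
(if `μ = 0` and `gcd(a,c)` is even) resp. `ℤ·l₁ ⊕ ℤ·l₂` (otherwise). -/
theorem stmt3 (a b c : ℤ) (hac : ¬ (a = 0 ∧ c = 0)) (μ : ℤ) (hμ : μ = 0 ∨ μ = 1)
    (hbμ : b % 2 = μ % 2)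
    (hprim0 : μ = 0 → Int.gcd (b / 2) (Int.gcd a c) = 1)
    (hprim1 : μ = 1 → Int.gcd a (Int.gcd b c) = 1)
    (g u v : ℤ) (hg : g = Int.gcd a c) (huv : a * v - u * c = g)
    (lam l₁ l₂ l₁' : Matrix (Fin 2) (Fin 2) ℚ)
    (hlam : lam = !![(b : ℚ) / 2, -(a : ℚ); (c : ℚ), -(b : ℚ) / 2])
    (hl₁ : l₁ = !![(g : ℚ), ((b * u : ℤ) : ℚ); ((b * v : ℤ) : ℚ), -(g : ℚ)])
    (hl₂ : l₂ = !![0, ((a / g : ℤ) : ℚ); ((c / g : ℤ) : ℚ), 0])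
    (hl₁' : l₁' = if μ = 0 ∧ Even g then (1 / 2 : ℚ) • l₁ else l₁) :
    (∀ x : Matrix (Fin 2) (Fin 2) ℚ,
      (memL x ∧ Matrix.trace (x * lam) = 0) ↔
        ∃ m n : ℤ, x = (m : ℚ) • l₁' + (n : ℚ) • l₂) ∧
    (∀ m n : ℤ, (m : ℚ) • l₁' + (n : ℚ) • l₂ = 0 → m = 0 ∧ n = 0) := by
  have hg0 : g ≠ 0 := by rw [hg]; exact_mod_cast mt Int.gcd_eq_zero_iff.mp hac
  have hcop0 : μ = 0 → IsCoprime (b / 2) g := fun h0 => by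
    rw [hg, Int.isCoprime_iff_gcd_eq_one]
    exact hprim0 h0
  have hcop1 : μ = 1 → IsCoprime g b := fun h1 => by
    rw [hg]
    exact isCoprime_gcd_of_gcd_gcd_eq_one (hprim1 h1)
  obtain ⟨a₁, rfl⟩ : g ∣ a := hg ▸ Int.gcd_dvd_left a c
  obtain ⟨c₁, rfl⟩ : g ∣ c := hg ▸ Int.gcd_dvd_right _ c
  have hbezout : a₁ * v - u * c₁ = 1 :=
    mul_left_cancel₀ hg0 (by linear_combination huv)
  rw [Int.mul_ediv_cancel_left _ hg0, Int.mul_ediv_cancel_left _ hg0, ← l₂Mat] at hl₂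
  obtain ⟨s, h, w, hs, rfl, rfl, hhw, hl₁Mat⟩ :=
    exists_coprime_l₁Mat_eq hμ hbμ hcop0 hcop1 u v
  rw [hl₁, ← l₁Mat, hl₁Mat] at hl₁'
  have hh : h ≠ 0 := right_ne_zero_of_mul hg0
  subst hlam hl₁' hl₂
  exact ⟨memL_and_trace_eq_zero_iff hs hh hhw hbezout,
    fun m n => eq_zero_of_smul_l₁Mat_add_smul_l₂Mat_eq_zero hh hbezout⟩
end

section
/- Let D < 0 be an integer with D ≡ 0 or 1 (mod 4), let μ ∈ {0,1} with D ≡ μ (mod 4) in the sense D ≡ μ (mod 2) and (μ² − D)/4 ∈ ℤ, and set ω = (μ + √D)/2 and O = ℤ + ℤ·ω ⊂ ℚ(√D). Set λ_D = [[μ/2, −1], [(μ−D)/4, −μ/2]] ∈ L', so Q(λ_D) = D/4. Then the map f : O → V given by f(x + y·ω) = [[x, y], [μ·x + y·(μ−D)/4, −x]] is an injective ℤ-linear map whose image is exactly P = L ∩ λ_D^⊥, and it satisfies Q(f(α)) = N(α) = α·ᾱ for all α ∈ O. In particular (O, N) and (P, Q|_P) are isometric quadratic ℤ-modules, both representing the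 integral binary quadratic form x² + μ·x·y + ((μ−D)/4)·y². -/
open Matrix

/-- Membership in the dual lattice `L'`. -/
def memL' (m : Matrix (Fin 2) (Fin 2) ℚ) : Prop :=
  ∃ a b c : ℤ, m = !![(b : ℚ) / 2, (c : ℚ); -(a : ℚ), -(b : ℚ) / 2]

/-- the map `x + yω ↦ [[x, y], [μx + y(μ−D)/4, −x]]` is an injective
`ℤ`-linear isometry from `(O, N)` onto `(P, Q|_P)`, where `O = ℤ + ℤω`,
`ω = (μ + √D)/2`, `P = L ∩ λ_D^⊥`, and both lattices represent the binary quadratic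
form `x² + μxy + ((μ−D)/4)y²`. -/
theorem stmt6 (D : ℤ) (hDneg : D < 0) (μ : ℤ) (hμ : μ = 0 ∨ μ = 1)
    (hDμ : D % 2 = μ % 2) (e : ℤ) (he : 4 * e = μ - D)
    (ω : ℂ) (hω : ω = ((μ : ℂ) + Complex.I * (Real.sqrt (-(D : ℝ)) : ℂ)) / 2)
    (lamD : Matrix (Fin 2) (Fin 2) ℚ)
    (hlamD : lamD = !![(μ : ℚ) / 2, -1; ((μ : ℚ) - (D : ℚ)) / 4, -(μ : ℚ) / 2])
    (F : ℤ × ℤ → Matrix (Fin 2) (Fin 2) ℚ)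
    (hF : ∀ x y : ℤ, F (x, y)
      = !![(x : ℚ), (y : ℚ); (μ : ℚ) * (x : ℚ) + (y : ℚ) * (e : ℚ), -(x : ℚ)]) :
    memL' lamD ∧ -lamD.det = (D : ℚ) / 4 ∧
    (∀ p q : ℤ × ℤ, F (p + q) = F p + F q) ∧
    Function.Injective F ∧
    (∀ m : Matrix (Fin 2) (Fin 2) ℚ,
      (∃ p : ℤ × ℤ, F p = m) ↔ (memL m ∧ Matrix.trace (m * lamD) = 0)) ∧
    (∀ x y : ℤ,
      ((-(F (x, y)).det : ℚ) : ℂ)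
        = ((x : ℂ) + (y : ℂ) * ω) * (starRingEnd ℂ) ((x : ℂ) + (y : ℂ) * ω) ∧
      -(F (x, y)).det = ((x ^ 2 + μ * x * y + e * y ^ 2 : ℤ) : ℚ)) := by
  have heQ : (e : ℚ) = ((μ : ℚ) - (D : ℚ)) / 4 := by
    have : (4 : ℚ) * (e : ℚ) = (μ : ℚ) - (D : ℚ) := by exact_mod_cast congrArg (Int.cast : ℤ → ℚ) he
    linarith
  have hμ2 : (μ : ℚ) ^ 2 = (μ : ℚ) := by
    rcases hμ with h | h <;> subst h <;> norm_num
  refine ⟨⟨-e, μ, -1, ?_⟩, ?_, ?_, ?_, ?_, ?_⟩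
  · rw [hlamD]
    congr 1
    push_cast
    rw [heQ]; ring
  · rw [hlamD]
    simp [Matrix.det_fin_two]
    nlinarith [hμ2]
  · rintro ⟨x, y⟩ ⟨x', y'⟩
    show F (x + x', y + y') = _
    rw [hF, hF, hF]
    push_cast
    ext i j
    fin_cases i <;> fin_cases j <;> simp [Matrix.add_apply] <;> ring
  · rintro ⟨x, y⟩ ⟨x', y'⟩ h
    rw [hF, hF] at h
    have h00 := congrFun (congrFun h 0) 0
    have h01 := congrFun (congrFun h 0) 1
    simp at h00 h01
    exact Prod.ext (by exact_mod_cast h00) (by exact_mod_cast h01)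
  · intro m
    constructor
    · rintro ⟨⟨x, y⟩, rfl⟩
      rw [hF]
      constructor
      · exact ⟨-(μ * x + y * e), x, y, by push_cast; ring_nf⟩
      · rw [hlamD]
        rw [Matrix.trace_fin_two, Matrix.mul_apply, Matrix.mul_apply]
        simp [Fin.sum_univ_two]
        rw [heQ]; ring
    · rintro ⟨⟨a, b, c, rfl⟩, htr⟩
      rw [hlamD, Matrix.trace_fin_two, Matrix.mul_apply, Matrix.mul_apply] at htr
      simp [Fin.sum_univ_two] at htr
      refine ⟨(b, c), ?_⟩
      rw [hF]
      congr 1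
      have : (μ : ℚ) * b + (c : ℚ) * e = -(a : ℚ) := by
        rw [heQ]; linarith
      rw [this]
  · intro x y
    rw [hF]
    have hdet : -(!![(x : ℚ), (y : ℚ); (μ : ℚ) * (x : ℚ) + (y : ℚ) * (e : ℚ), -(x : ℚ)]).det
        = ((x ^ 2 + μ * x * y + e * y ^ 2 : ℤ) : ℚ) := by
      simp [Matrix.det_fin_two]; push_cast; ring
    refine ⟨?_, hdet⟩
    rw [hdet, hω]
    have hDR : (0 : ℝ) ≤ -(D : ℝ) := by
      have : (D : ℝ) < 0 := by exact_mod_cast hDneg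
      linarith
    have hs : ((Real.sqrt (-(D : ℝ)) : ℂ)) * ((Real.sqrt (-(D : ℝ)) : ℂ)) = -(D : ℂ) := by
      rw [← Complex.ofReal_mul, Real.mul_self_sqrt hDR]
      push_cast; ring
    have hconj : (starRingEnd ℂ) ((x : ℂ) + (y : ℂ) * (((μ : ℂ) + Complex.I * (Real.sqrt (-(D : ℝ)) : ℂ)) / 2))
        = (x : ℂ) + (y : ℂ) * (((μ : ℂ) - Complex.I * (Real.sqrt (-(D : ℝ)) : ℂ)) / 2) := by
      simp only [map_add, _root_.map_mul, map_div₀, map_intCast, Complex.conj_I,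
        Complex.conj_ofReal, map_ofNat]
      ring
    rw [hconj]
    have hμC : (μ : ℂ) ^ 2 = (μ : ℂ) := by rcases hμ with h | h <;> subst h <;> norm_num
    have heC : (4 : ℂ) * (e : ℂ) = (μ : ℂ) - (D : ℂ) := by exact_mod_cast congrArg (Int.cast : ℤ → ℂ) he
    push_cast
    have expand : ((x : ℂ) + (y : ℂ) * (((μ : ℂ) + Complex.I * (Real.sqrt (-(D : ℝ)) : ℂ)) / 2)) *
        ((x : ℂ) + (y : ℂ) * (((μ : ℂ) - Complex.I * (Real.sqrt (-(D : ℝ)) : ℂ)) / 2))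
        = (x : ℂ)^2 + (μ : ℂ) * x * y + (y : ℂ)^2 * ((μ : ℂ)^2 - Complex.I^2 * (-(D : ℂ))) / 4 := by
      rw [← hs]; ring
    rw [expand, Complex.I_sq, hμC]
    push_cast
    linear_combination ((y : ℂ)^2 / 4) * heC
end

section
/- Let a, b, c ∈ ℤ with b odd and a ≠ 0, set D = b² − 4ac, λ = [[b/2, −a], [c, −b/2]] and λ_D = [[1/2, −1], [(1−D)/4, −1/2]]. Then the invertible matrix γ = [[1, 0], [−(b−1)/2, a]] ∈ GL₂(ℚ) satisfies γ·λ·γ⁻¹ = λ_D. In particular every λ in the coset L + [[1/2,0],[0,−1/2]] with Q(λ) = D/4 and a ≠ 0 is GL₂(ℚ)-conjugate to λ_D. -/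
open Matrix

lemma stmt7_aux (a b c D : ℤ) (ha : a ≠ 0) (hD : D = b ^ 2 - 4 * a * c) :
    IsUnit (!![(1 : ℚ), 0; -(((b : ℚ) - 1) / 2), (a : ℚ)]).det ∧
    !![(1 : ℚ), 0; -(((b : ℚ) - 1) / 2), (a : ℚ)] *
      !![(b : ℚ) / 2, -(a : ℚ); (c : ℚ), -(b : ℚ) / 2] *
      (!![(1 : ℚ), 0; -(((b : ℚ) - 1) / 2), (a : ℚ)])⁻¹ =
      !![(1 : ℚ) / 2, -1; (1 - (D : ℚ)) / 4, -(1 : ℚ) / 2] := by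
  have haQ : (a : ℚ) ≠ 0 := by exact_mod_cast ha
  have hdet : (!![(1 : ℚ), 0; -(((b : ℚ) - 1) / 2), (a : ℚ)]).det = a := by
    simp [Matrix.det_fin_two_of]
  have hu : IsUnit (!![(1 : ℚ), 0; -(((b : ℚ) - 1) / 2), (a : ℚ)]).det := by
    rw [hdet]; exact isUnit_iff_ne_zero.mpr haQ
  refine ⟨hu, ?_⟩
  have := Matrix.invertibleOfIsUnitDet _ hu
  rw [Matrix.mul_inv_eq_iff_eq_mul_of_invertible]
  have hDQ : (D : ℚ) = (b : ℚ) ^ 2 - 4 * a * c := by exact_mod_cast hD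
  ext i j
  fin_cases i <;> fin_cases j <;>
    simp [Matrix.mul_apply, Fin.sum_univ_two, hDQ] <;> field_simp <;> ring

/-- for `b` odd and `a ≠ 0`, the matrix `γ = [[1,0],[−(b−1)/2, a]]` is
invertible and conjugates `λ = [[b/2,−a],[c,−b/2]]` to `λ_D = [[1/2,−1],[(1−D)/4,−1/2]]`;
in particular every such `λ` with `Q(λ) = D/4` and nonzero upper-right coefficient is
`GL₂(ℚ)`-conjugate to `λ_D`. -/
theorem stmt7 (a b c : ℤ) (hb : Odd b) (ha : a ≠ 0) (D : ℤ)
    (hD : D = b ^ 2 - 4 * a * c)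
    (lam lamD γ : Matrix (Fin 2) (Fin 2) ℚ)
    (hlam : lam = !![(b : ℚ) / 2, -(a : ℚ); (c : ℚ), -(b : ℚ) / 2])
    (hlamD : lamD = !![(1 : ℚ) / 2, -1; (1 - (D : ℚ)) / 4, -(1 : ℚ) / 2])
    (hγ : γ = !![(1 : ℚ), 0; -(((b : ℚ) - 1) / 2), (a : ℚ)]) :
    (IsUnit γ.det ∧ γ * lam * γ⁻¹ = lamD) ∧
    (∀ a' b' c' : ℤ, Odd b' → a' ≠ 0 → b' ^ 2 - 4 * a' * c' = D →
      ∃ g : Matrix (Fin 2) (Fin 2) ℚ, IsUnit g.det ∧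
        g * !![(b' : ℚ) / 2, -(a' : ℚ); (c' : ℚ), -(b' : ℚ) / 2] * g⁻¹ = lamD) := by
  subst hlam hlamD hγ
  refine ⟨stmt7_aux a b c D ha hD, ?_⟩
  intro a' b' c' _ ha' hD'
  exact ⟨_, stmt7_aux a' b' c' D ha' hD'.symm⟩
end

section
/- Let D < 0 be an odd fundamental discriminant (D ≡ 1 mod 4, D squarefree) and let p be a prime. Let S_p be the set of matrices λ = [[b/2, −a], [c, −b/2]] ∈ M₂(ℚ_p) with a, b, c ∈ ℤ_p, with b a unit of ℤ₂ in case p = 2, and with b² − 4ac = D (equivalently −det(λ) = D/4). Then GL₂(ℤ_p) acts transitively on S_p by conjugation: for any λ, λ' ∈ S_p there exists k ∈ GL₂(ℤ_p) with k·λ·k⁻¹ = λ'. In particular every λ ∈ S_p is GL₂(ℤ_p)-conjugate to λ_D = [[1/2, −1], [(1−D)/4, −1/2]]. -/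
open Matrix

namespace Stmt8Aux

variable {p : ℕ} [Fact p.Prime]

/-- The matrix associated with a triple. -/
noncomputable def lamc (a b c : ℤ_[p]) : Matrix (Fin 2) (Fin 2) ℚ_[p] :=
  !![(b : ℚ_[p]) / 2, -(a : ℚ_[p]); (c : ℚ_[p]), -(b : ℚ_[p]) / 2]

lemma map_mul' (A B : Matrix (Fin 2) (Fin 2) ℤ_[p]) :
    (A * B).map (fun x => (x : ℚ_[p])) =
      A.map (fun x => (x : ℚ_[p])) * B.map (fun x => (x : ℚ_[p])) := by
  ext i j
  simp [Matrix.map_apply, Matrix.mul_apply, Fin.sum_univ_succ]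

lemma det_map (A : Matrix (Fin 2) (Fin 2) ℤ_[p]) :
    (A.map (fun x => (x : ℚ_[p]))).det = ((A.det : ℤ_[p]) : ℚ_[p]) := by
  simp [Matrix.det_fin_two, Matrix.map_apply]

lemma nonunit_dvd {z : ℤ_[p]} (h : ¬ IsUnit z) : (p : ℤ_[p]) ∣ z := by
  rw [← PadicInt.norm_lt_one_iff_dvd]
  exact PadicInt.not_isUnit_iff.mp h

lemma exists_half (b : ℤ_[p]) (hb2 : p = 2 → IsUnit b) : ∃ s : ℤ_[p], 2 * s = 1 - b := by
  by_cases hp : p = 2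
  · subst hp
    have hb := hb2 rfl
    have h1 : PadicInt.toZMod b = 1 := by
      have hub : IsUnit (PadicInt.toZMod b) := hb.map _
      have hall : ∀ x : ZMod 2, x = 0 ∨ x = 1 := by
        intro x
        fin_cases x
        · left; rfl
        · right; rfl
      rcases hall (PadicInt.toZMod b) with h | h
      · rw [h] at hub
        exact absurd hub (by simp)
      · exact h
    have hker : (1 - b) ∈ RingHom.ker (PadicInt.toZMod : ℤ_[2] →+* ZMod 2) := by
      rw [RingHom.mem_ker, map_sub, _root_.map_one, h1, sub_self]
    rw [PadicInt.ker_toZMod, PadicInt.maximalIdeal_eq_span_p, Ideal.mem_span_singleton] at hker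
    obtain ⟨s, hs⟩ := hker
    refine ⟨s, ?_⟩
    rw [hs]
    push_cast
    ring
  · have h2 : IsUnit (2 : ℤ_[p]) := by
      by_contra h
      have hd := nonunit_dvd h
      have : ((2 : ℤ) : ℤ_[p]) = (2 : ℤ_[p]) := by push_cast; ring
      rw [← this, ← PadicInt.norm_lt_one_iff_dvd, PadicInt.norm_int_lt_one_iff_dvd] at hd
      have hd2 : p ∣ 2 := by exact_mod_cast hd
      exact hp ((Nat.prime_dvd_prime_iff_eq Fact.out Nat.prime_two).mp hd2)
    obtain ⟨u, hu⟩ := h2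
    refine ⟨(↑u⁻¹ : ℤ_[p]) * (1 - b), ?_⟩
    rw [← mul_assoc, ← hu]
    rw [← Units.val_mul, mul_inv_cancel, Units.val_one, one_mul]

lemma sq_not_dvd {D : ℤ} (hDsf : Squarefree D) : ¬ ((p : ℤ_[p]) ^ 2 ∣ ((D : ℤ) : ℤ_[p])) := by
  intro ⟨m, hm⟩
  have hnorm : ‖((D : ℤ) : ℤ_[p])‖ ≤ (p : ℝ) ^ (-(2 : ℕ) : ℤ) := by
    rw [hm, norm_mul, PadicInt.norm_p_pow]
    calc (p:ℝ) ^ (-(2:ℕ):ℤ) * ‖m‖ ≤ (p:ℝ) ^ (-(2:ℕ):ℤ) * 1 := by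
          exact mul_le_mul_of_nonneg_left (PadicInt.norm_le_one m) (by positivity)
      _ = (p:ℝ) ^ (-(2:ℕ):ℤ) := mul_one _
  rw [PadicInt.norm_int_le_pow_iff_dvd] at hnorm
  have hPu : IsUnit (p : ℤ) := hDsf (p : ℤ) (by
    have : ((p : ℤ) * (p : ℤ)) = (p:ℤ)^2 := by ring
    rw [this]
    exact_mod_cast hnorm)
  rcases Int.isUnit_iff.mp hPu with h | h
  · have := (Fact.out : p.Prime).one_lt
    omega
  · omega

lemma unit_of_nonunits {D : ℤ} (hDsf : Squarefree D) {a b c : ℤ_[p]}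
    (ha : ¬ IsUnit a) (hc : ¬ IsUnit c) (hd : b ^ 2 - 4 * a * c = ((D : ℤ) : ℤ_[p])) :
    IsUnit b := by
  by_contra hb
  obtain ⟨a', rfl⟩ := nonunit_dvd ha
  obtain ⟨b', rfl⟩ := nonunit_dvd hb
  obtain ⟨c', rfl⟩ := nonunit_dvd hc
  exact sq_not_dvd hDsf ⟨b' ^ 2 - 4 * a' * c', by rw [← hd]; ring⟩

noncomputable def lamDm (D : ℤ) : Matrix (Fin 2) (Fin 2) ℚ_[p] :=
  !![(1 : ℚ_[p]) / 2, -1; (1 - (D : ℚ_[p])) / 4, -(1 : ℚ_[p]) / 2]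

lemma map_ff (x y z w : ℤ_[p]) :
    ((!![x, y; z, w] : Matrix (Fin 2) (Fin 2) ℤ_[p]).map (fun t => (t : ℚ_[p]))) =
      !![(x : ℚ_[p]), (y : ℚ_[p]); (z : ℚ_[p]), (w : ℚ_[p])] := by
  ext i j
  fin_cases i <;> fin_cases j <;> simp [Matrix.map_apply]

lemma lemU {D : ℤ} (a b c s : ℤ_[p]) (hs : 2 * s = 1 - b)
    (hd : b ^ 2 - 4 * a * c = ((D : ℤ) : ℤ_[p])) :
    (!![1, 0; s, a] : Matrix (Fin 2) (Fin 2) ℤ_[p]).map (fun t => (t : ℚ_[p])) * lamc a b c =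
      lamDm D * (!![1, 0; s, a] : Matrix (Fin 2) (Fin 2) ℤ_[p]).map (fun t => (t : ℚ_[p])) := by
  have hs' : 2 * (s : ℚ_[p]) = 1 - (b : ℚ_[p]) := by exact_mod_cast congrArg (fun z : ℤ_[p] => (z : ℚ_[p])) hs
  have hd' : (b : ℚ_[p]) ^ 2 - 4 * (a : ℚ_[p]) * (c : ℚ_[p]) = (D : ℚ_[p]) := by
    exact_mod_cast congrArg (fun z : ℤ_[p] => (z : ℚ_[p])) hd
  rw [map_ff]
  ext i j
  fin_cases i <;> fin_cases j <;>
    simp [lamc, lamDm, Matrix.mul_apply, Fin.sum_univ_succ] <;>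
    first
      | linear_combination hs' / 2
      | linear_combination (((b : ℚ_[p]) + 1) / 4) * hs' - (1 / 4) * hd'
      | linear_combination (-(a : ℚ_[p]) / 2) * hs'
      | ring
lemma coe_two : ((2 : ℤ_[p]) : ℚ_[p]) = 2 := rfl

lemma nonunit_of_dvd {z : ℤ_[p]} (h : (p : ℤ_[p]) ∣ z) : ¬ IsUnit z :=
  PadicInt.not_isUnit_iff.mpr ((PadicInt.norm_lt_one_iff_dvd z).mpr h)

lemma lemW (a b c : ℤ_[p]) :
    (!![0, 1; 1, 0] : Matrix (Fin 2) (Fin 2) ℤ_[p]).map (fun t => (t : ℚ_[p])) * lamc a b c =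
      lamc (-c) (-b) (-a) * (!![0, 1; 1, 0] : Matrix (Fin 2) (Fin 2) ℤ_[p]).map (fun t => (t : ℚ_[p])) := by
  rw [map_ff]
  ext i j
  fin_cases i <;> fin_cases j
  all_goals simp [lamc, Matrix.mul_apply, Fin.sum_univ_succ]
  all_goals push_cast [coe_two]
  all_goals ring

lemma lemT (a b c : ℤ_[p]) :
    (!![1, 1; 0, 1] : Matrix (Fin 2) (Fin 2) ℤ_[p]).map (fun t => (t : ℚ_[p])) * lamc a b c =
      lamc (a + b + c) (b + 2 * c) c * (!![1, 1; 0, 1] : Matrix (Fin 2) (Fin 2) ℤ_[p]).map (fun t => (t : ℚ_[p])) := by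
  rw [map_ff]
  ext i j
  fin_cases i <;> fin_cases j
  all_goals simp [lamc, Matrix.mul_apply, Fin.sum_univ_succ]
  all_goals push_cast [coe_two]
  all_goals ring

lemma key (D : ℤ) (hDsf : Squarefree D) (a b c : ℤ_[p]) (hb2 : p = 2 → IsUnit b)
    (hd : b ^ 2 - 4 * a * c = ((D : ℤ) : ℤ_[p])) :
    ∃ k : Matrix (Fin 2) (Fin 2) ℤ_[p], IsUnit k.det ∧
      k.map (fun t => (t : ℚ_[p])) * lamc a b c = lamDm D * k.map (fun t => (t : ℚ_[p])) := by
  by_cases ha : IsUnit a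
  · obtain ⟨s, hs⟩ := exists_half b hb2
    refine ⟨!![1, 0; s, a], ?_, lemU a b c s hs hd⟩
    simpa [Matrix.det_fin_two_of] using ha
  by_cases hc : IsUnit c
  · obtain ⟨s, hs⟩ := exists_half (-b) (fun h => (hb2 h).neg)
    have hd2 : (-b) ^ 2 - 4 * (-c) * (-a) = ((D : ℤ) : ℤ_[p]) := by linear_combination hd
    refine ⟨!![1, 0; s, -c] * !![0, 1; 1, 0], ?_, ?_⟩
    · rw [Matrix.det_mul]
      have e1 : (!![(1 : ℤ_[p]), 0; s, -c]).det = -c := by simp [Matrix.det_fin_two_of]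
      have e2 : (!![(0 : ℤ_[p]), 1; 1, 0]).det = -1 := by simp [Matrix.det_fin_two_of]
      rw [e1, e2]
      simpa using hc
    · rw [map_mul', mul_assoc, lemW a b c, ← mul_assoc,
        lemU (-c) (-b) (-a) s hs hd2, mul_assoc]
  · have hb : IsUnit b := by
      by_cases h2 : p = 2
      · exact hb2 h2
      · exact unit_of_nonunits hDsf ha hc hd
    have ha0 : IsUnit (a + b + c) := by
      by_contra h
      have hdvd : (p : ℤ_[p]) ∣ b := by
        have h1 := nonunit_dvd h
        have h2 := nonunit_dvd ha
        have h3 := nonunit_dvd hc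
        have : b = (a + b + c) - a - c := by ring
        rw [this]
        exact dvd_sub (dvd_sub h1 h2) h3
      exact nonunit_of_dvd hdvd hb
    have hb20 : p = 2 → IsUnit (b + 2 * c) := by
      intro h2
      subst h2
      by_contra h
      have hdvd : ((2 : ℕ) : ℤ_[2]) ∣ b := by
        have h1 := nonunit_dvd h
        have hp2 : ((2 : ℕ) : ℤ_[2]) = 2 := by push_cast; ring
        have hbe : b = (b + 2 * c) - 2 * c := by ring
        rw [hbe]
        exact dvd_sub h1 (by rw [hp2]; exact Dvd.intro c rfl)
      exact nonunit_of_dvd hdvd hb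
    have hd3 : (b + 2 * c) ^ 2 - 4 * (a + b + c) * c = ((D : ℤ) : ℤ_[p]) := by
      linear_combination hd
    obtain ⟨s, hs⟩ := exists_half (b + 2 * c) hb20
    refine ⟨!![1, 0; s, a + b + c] * !![1, 1; 0, 1], ?_, ?_⟩
    · rw [Matrix.det_mul]
      have e1 : (!![(1 : ℤ_[p]), 0; s, a + b + c]).det = a + b + c := by
        simp [Matrix.det_fin_two_of]
      have e2 : (!![(1 : ℤ_[p]), 1; 0, 1]).det = 1 := by simp [Matrix.det_fin_two_of]
      rw [e1, e2]
      simpa using ha0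
    · rw [map_mul', mul_assoc, lemT a b c, ← mul_assoc,
        lemU (a + b + c) (b + 2 * c) c s hs hd3, mul_assoc]

lemma conj_of_comm {k : Matrix (Fin 2) (Fin 2) ℤ_[p]} (hk : IsUnit k.det)
    {A B : Matrix (Fin 2) (Fin 2) ℚ_[p]}
    (h : k.map (fun t => (t : ℚ_[p])) * A = B * k.map (fun t => (t : ℚ_[p]))) :
    k.map (fun t => (t : ℚ_[p])) * A * (k.map (fun t => (t : ℚ_[p])))⁻¹ = B := by
  have hdet : IsUnit ((k.map (fun t => (t : ℚ_[p]))).det) := by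
    rw [det_map]
    exact hk.map (PadicInt.Coe.ringHom)
  rw [h, mul_assoc, Matrix.mul_nonsing_inv _ hdet, mul_one]

lemma map_one' : ((1 : Matrix (Fin 2) (Fin 2) ℤ_[p]).map (fun t => (t : ℚ_[p]))) = 1 :=
  Matrix.map_one _ (by simp) (by simp)

end Stmt8Aux

/-- for an odd fundamental discriminant `D < 0` and any prime `p`, the group
`GL₂(ℤ_p)` acts transitively by conjugation on the set `S_p` of matrices
`[[b/2,−a],[c,−b/2]]` with `a,b,c ∈ ℤ_p` (`b` a unit if `p = 2`) and `b² − 4ac = D`;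
in particular every element of `S_p` is conjugate to `λ_D = [[1/2,−1],[(1−D)/4,−1/2]]`. -/
theorem stmt8 (p : ℕ) [Fact p.Prime] (D : ℤ) (hDneg : D < 0) (hD1 : D % 4 = 1)
    (hDsf : Squarefree D)
    (Sp : Matrix (Fin 2) (Fin 2) ℚ_[p] → Prop)
    (hSp : ∀ lam, Sp lam ↔ ∃ a b c : ℤ_[p],
      lam = !![(b : ℚ_[p]) / 2, -(a : ℚ_[p]); (c : ℚ_[p]), -(b : ℚ_[p]) / 2] ∧
      (p = 2 → IsUnit b) ∧ b ^ 2 - 4 * a * c = (D : ℤ_[p]))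
    (lamD : Matrix (Fin 2) (Fin 2) ℚ_[p])
    (hlamD : lamD = !![(1 : ℚ_[p]) / 2, -1; (1 - (D : ℚ_[p])) / 4, -(1 : ℚ_[p]) / 2]) :
    (∀ lam lam', Sp lam → Sp lam' →
      ∃ k : Matrix (Fin 2) (Fin 2) ℤ_[p], IsUnit k.det ∧
        (k.map (fun x => (x : ℚ_[p]))) * lam * (k.map (fun x => (x : ℚ_[p])))⁻¹ = lam') ∧
    Sp lamD ∧
    (∀ lam, Sp lam →
      ∃ k : Matrix (Fin 2) (Fin 2) ℤ_[p], IsUnit k.det ∧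
        (k.map (fun x => (x : ℚ_[p]))) * lam * (k.map (fun x => (x : ℚ_[p])))⁻¹ = lamD) := by

  have key' : ∀ lam, Sp lam → ∃ k : Matrix (Fin 2) (Fin 2) ℤ_[p], IsUnit k.det ∧
      (k.map (fun x => (x : ℚ_[p]))) * lam = lamD * (k.map (fun x => (x : ℚ_[p]))) := by
    intro lam h
    rw [hSp] at h
    obtain ⟨a, b, c, rfl, hb2, hd⟩ := h
    rw [hlamD]
    exact Stmt8Aux.key D hDsf a b c hb2 hd
  refine ⟨?_, ?_, ?_⟩
  · intro lam lam' h h'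
    obtain ⟨k1, hk1, e1⟩ := key' lam h
    obtain ⟨k2, hk2, e2⟩ := key' lam' h'
    obtain ⟨u, hu⟩ := (Matrix.isUnit_iff_isUnit_det k2).mpr hk2
    have hkdet : IsUnit ((((↑u⁻¹ : Matrix (Fin 2) (Fin 2) ℤ_[p])) * k1).det) := by
      rw [Matrix.det_mul]
      exact ((Matrix.isUnit_iff_isUnit_det _).mp u⁻¹.isUnit).mul hk1
    refine ⟨(↑u⁻¹ : Matrix (Fin 2) (Fin 2) ℤ_[p]) * k1, hkdet, ?_⟩
    apply Stmt8Aux.conj_of_comm hkdet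
    set f : ℤ_[p] → ℚ_[p] := fun x => (x : ℚ_[p]) with hf
    have hNM : (↑u⁻¹ : Matrix (Fin 2) (Fin 2) ℤ_[p]).map f * k2.map f = 1 := by
      rw [← Stmt8Aux.map_mul', ← hu, Units.inv_mul, Stmt8Aux.map_one']
    have hMN : k2.map f * (↑u⁻¹ : Matrix (Fin 2) (Fin 2) ℤ_[p]).map f = 1 := by
      rw [← Stmt8Aux.map_mul', ← hu, Units.mul_inv, Stmt8Aux.map_one']
    have hlam' : lam' = (↑u⁻¹ : Matrix (Fin 2) (Fin 2) ℤ_[p]).map f * (lamD * k2.map f) := by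
      have h0 : (↑u⁻¹ : Matrix (Fin 2) (Fin 2) ℤ_[p]).map f * (k2.map f * lam')
          = (↑u⁻¹ : Matrix (Fin 2) (Fin 2) ℤ_[p]).map f * (lamD * k2.map f) := by rw [e2]
      rwa [← mul_assoc, hNM, one_mul] at h0
    rw [Stmt8Aux.map_mul', hlam']
    calc (↑u⁻¹ : Matrix (Fin 2) (Fin 2) ℤ_[p]).map f * k1.map f * lam
        = (↑u⁻¹ : Matrix (Fin 2) (Fin 2) ℤ_[p]).map f * (lamD * k1.map f) := by
          rw [mul_assoc, e1]
      _ = (↑u⁻¹ : Matrix (Fin 2) (Fin 2) ℤ_[p]).map f * (lamD * ((k2.map f *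
            (↑u⁻¹ : Matrix (Fin 2) (Fin 2) ℤ_[p]).map f) * k1.map f)) := by
          rw [hMN, one_mul]
      _ = (↑u⁻¹ : Matrix (Fin 2) (Fin 2) ℤ_[p]).map f * (lamD * k2.map f) *
            ((↑u⁻¹ : Matrix (Fin 2) (Fin 2) ℤ_[p]).map f * k1.map f) := by
          simp only [mul_assoc]
  · rw [hSp]
    obtain ⟨e, he⟩ : ∃ e : ℤ, 1 - D = 4 * e := ⟨(1 - D) / 4, by omega⟩
    have he' : (1 : ℚ_[p]) - (D : ℚ_[p]) = 4 * (e : ℚ_[p]) := by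
      have h0 := congrArg (fun z : ℤ => (z : ℚ_[p])) he
      push_cast at h0
      linear_combination h0
    refine ⟨1, 1, (e : ℤ_[p]), ?_, fun _ => isUnit_one, ?_⟩
    · rw [hlamD]
      ext i j
      fin_cases i <;> fin_cases j
      all_goals simp
      all_goals push_cast [PadicInt.coe_intCast]
      all_goals first
        | linear_combination he' / 4
        | linear_combination he' / 2
        | linear_combination -he' / 4
        | linear_combination -he' / 2
        | ring
    · have hD' : ((1 : ℤ) : ℤ_[p]) ^ 2 - 4 * 1 * ((e : ℤ) : ℤ_[p]) = ((D : ℤ) : ℤ_[p]) := by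
        have h0 := congrArg (fun z : ℤ => (z : ℤ_[p])) he
        push_cast at h0
        linear_combination h0
      simpa using hD'
  · intro lam h
    obtain ⟨k, hk, e⟩ := key' lam h
    exact ⟨k, hk, Stmt8Aux.conj_of_comm hk e⟩
end

section
/- Let D < 0 be an odd fundamental discriminant (D ≡ 1 mod 4, D squarefree). Set λ_D = [[1/2, −1], [(1−D)/4, −1/2]], P = L ∩ λ_D^⊥ and N = L ∩ ℚ·λ_D = ℤ·2λ_D. Then the quotient group L'/(P ⊕ N) is cyclic of order 2|D|, generated by the image of x₀ = [[1/2, 0], [0, −1/2]] ∈ L'. Moreover the orthogonal decomposition of x₀ along (λ_D^⊥) ⊕ ℚλ_D is x₀ = (x₀ − (1/D)·λ_D) + (1/D)·λ_D, i.e. x₀ − (1/D)λ_D satisfies B(x₀ − (1/D)λ_D, λ_D) = 0. -/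
open Matrix

/-!
Write `D = 1 - 4M`. The functional `x ↦ tr (x λ_D)` vanishes on `P` and takes `2kλ_D` to `kD`,
because `tr (λ_D²) = D / 2`; since `tr (x₀ λ_D) = 1 / 2`, a multiple `n x₀` lies in `P ⊕ N` only
if `2D ∣ n`. Conversely `P` contains `[[1,0],[1,-1]]` and `[[0,1],[M,0]]`, and explicit integral
combinations of these and `2λ_D` give `2D x₀` and `x - (2a + b + 2Mc) x₀` for every
`x = [[b/2,c],[-a,-b/2]] ∈ L'`. Hence `x₀` generates `L'/(P ⊕ N)` and has order `2|D|`.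
-/

theorem addOrderOf_eq_of_forall_zsmul_eq_zero_iff {A : Type*} [AddGroup A] {x : A} {m : ℕ}
    (h : ∀ n : ℤ, n • x = 0 ↔ (m : ℤ) ∣ n) : addOrderOf x = m := by
  have hdvd (n : ℤ) : (addOrderOf x : ℤ) ∣ n ↔ (m : ℤ) ∣ n :=
    addOrderOf_dvd_iff_zsmul_eq_zero.trans (h n)
  exact Nat.dvd_antisymm (Int.natCast_dvd_natCast.mp ((hdvd m).mpr dvd_rfl))
    (Int.natCast_dvd_natCast.mp ((hdvd _).mp dvd_rfl))

section CyclicQuotient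

variable {G : Type*} [AddCommGroup G] {K : AddSubgroup G} {g : G}

theorem QuotientAddGroup.mem_zmultiples_mk_of_forall_exists_sub_zsmul_mem
    (hgen : ∀ y : G, ∃ n : ℤ, y - n • g ∈ K) (q : G ⧸ K) :
    q ∈ AddSubgroup.zmultiples (QuotientAddGroup.mk g : G ⧸ K) := by
  induction q using QuotientAddGroup.induction_on with
  | H y =>
    obtain ⟨n, hn⟩ := hgen y
    refine ⟨n, show n • (g : G ⧸ K) = y from ?_⟩
    rw [← QuotientAddGroup.mk_zsmul, QuotientAddGroup.eq, ← sub_eq_neg_add]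
    exact hn

theorem QuotientAddGroup.card_eq_of_zsmul_mem_iff {m : ℕ}
    (hgen : ∀ q : G ⧸ K, q ∈ AddSubgroup.zmultiples (QuotientAddGroup.mk g : G ⧸ K))
    (hker : ∀ n : ℤ, n • g ∈ K ↔ (m : ℤ) ∣ n) : Nat.card (G ⧸ K) = m := by
  rw [← addOrderOf_eq_card_of_forall_mem_zmultiples hgen]
  refine addOrderOf_eq_of_forall_zsmul_eq_zero_iff fun n => ?_
  rw [← QuotientAddGroup.mk_zsmul, QuotientAddGroup.eq_zero_iff, hker]

end CyclicQuotient

namespace OddDiscriminant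

def lam (D : ℚ) : Matrix (Fin 2) (Fin 2) ℚ := !![(1 : ℚ) / 2, -1; (1 - D) / 4, -(1 : ℚ) / 2]

def x0 : Matrix (Fin 2) (Fin 2) ℚ := !![(1 : ℚ) / 2, 0; 0, -(1 : ℚ) / 2]

-- `P ⊕ N` of the statement when `l = λ_D`.
def perpSumLine (l : Matrix (Fin 2) (Fin 2) ℚ) : AddSubgroup (Matrix (Fin 2) (Fin 2) ℚ) :=
  AddSubgroup.closure
    {x | (memL x ∧ trace (x * l) = 0) ∨ ∃ k : ℤ, x = (k : ℚ) • ((2 : ℚ) • l)}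

theorem trace_x0_mul_lam (D : ℚ) : trace (x0 * lam D) = 1 / 2 := by
  simp [x0, lam, trace_fin_two]
  norm_num

theorem trace_lam_mul_lam (D : ℚ) : trace (lam D * lam D) = D / 2 := by
  simp [lam, trace_fin_two]
  ring

theorem trace_sub_inv_smul_mul_lam {D : ℚ} (hD : D ≠ 0) :
    trace ((x0 - D⁻¹ • lam D) * lam D) = 0 := by
  rw [sub_mul, trace_sub, smul_mul_assoc, trace_smul, trace_x0_mul_lam, trace_lam_mul_lam,
    smul_eq_mul]
  field_simp
  ring

theorem trace_mul_lam_mem_zmultiples {D : ℚ} {x : Matrix (Fin 2) (Fin 2) ℚ}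
    (hx : x ∈ perpSumLine (lam D)) : trace (x * lam D) ∈ AddSubgroup.zmultiples D := by
  let pairing := (traceAddMonoidHom (Fin 2) ℚ).comp (AddMonoidHom.mulRight (lam D))
  suffices perpSumLine (lam D) ≤ (AddSubgroup.zmultiples D).comap pairing from this hx
  refine (AddSubgroup.closure_le _).mpr ?_
  rintro y (⟨-, hy⟩ | ⟨k, rfl⟩)
  · simp [pairing, hy]
  · refine ⟨k, ?_⟩
    simp only [pairing, AddMonoidHom.coe_comp, Function.comp_apply, AddMonoidHom.coe_mulRight,
      traceAddMonoidHom_apply, smul_mul_assoc, trace_smul, trace_lam_mul_lam, smul_eq_mul,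
      zsmul_eq_mul]
    ring

def perpBasis₁ : Matrix (Fin 2) (Fin 2) ℚ := !![1, 0; 1, -1]

def perpBasis₂ (M : ℤ) : Matrix (Fin 2) (Fin 2) ℚ := !![0, 1; (M : ℚ), 0]

theorem lam_one_sub_four_mul (M : ℤ) :
    lam ((1 - 4 * M : ℤ) : ℚ) = !![(1 : ℚ) / 2, -1; (M : ℚ), -(1 : ℚ) / 2] := by
  rw [lam]
  congr
  push_cast
  ring

theorem perpBasis₁_mem (M : ℤ) : perpBasis₁ ∈ perpSumLine (lam ((1 - 4 * M : ℤ) : ℚ)) := by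
  refine AddSubgroup.subset_closure (Or.inl ⟨⟨-1, 1, 0, by norm_num [perpBasis₁]⟩, ?_⟩)
  rw [lam_one_sub_four_mul]
  simp [perpBasis₁, trace_fin_two]
  norm_num

theorem perpBasis₂_mem (M : ℤ) : perpBasis₂ M ∈ perpSumLine (lam ((1 - 4 * M : ℤ) : ℚ)) := by
  refine AddSubgroup.subset_closure (Or.inl ⟨⟨-M, 0, 1, by simp [perpBasis₂]⟩, ?_⟩)
  rw [lam_one_sub_four_mul]
  simp [perpBasis₂, trace_fin_two]

theorem two_smul_lam_mem (D : ℚ) : (2 : ℚ) • lam D ∈ perpSumLine (lam D) :=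
  AddSubgroup.subset_closure (Or.inr ⟨1, by simp⟩)

theorem zsmul_x0_mem_iff {D : ℤ} (hD : D % 4 = 1) (n : ℤ) :
    n • x0 ∈ perpSumLine (lam D) ↔ 2 * D ∣ n := by
  constructor
  · intro h
    obtain ⟨k, hk⟩ := AddSubgroup.mem_zmultiples_iff.mp (trace_mul_lam_mem_zmultiples h)
    rw [smul_mul_assoc, trace_smul, trace_x0_mul_lam, zsmul_eq_mul, zsmul_eq_mul] at hk
    exact ⟨k, by exact_mod_cast (by linear_combination -2 * hk : (n : ℚ) = 2 * D * k)⟩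
  · rintro ⟨k, rfl⟩
    obtain ⟨M, rfl⟩ : ∃ M : ℤ, D = 1 - 4 * M := ⟨(1 - D) / 4, by omega⟩
    have hcomb : (2 * (1 - 4 * M)) • x0 =
        (-4 * M) • perpBasis₁ + 2 • perpBasis₂ M + (2 : ℚ) • lam ((1 - 4 * M : ℤ) : ℚ) := by
      rw [lam_one_sub_four_mul]
      ext i j
      fin_cases i <;> fin_cases j <;> simp [x0, perpBasis₁, perpBasis₂] <;> ring
    rw [mul_comm _ k, mul_zsmul, hcomb]
    exact zsmul_mem (add_mem (add_mem (zsmul_mem (perpBasis₁_mem M) _)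
      (zsmul_mem (perpBasis₂_mem M) _)) (two_smul_lam_mem _)) k

theorem exists_sub_zsmul_x0_mem {D : ℤ} (hD : D % 4 = 1) {x : Matrix (Fin 2) (Fin 2) ℚ}
    (hx : memL' x) : ∃ n : ℤ, x - n • x0 ∈ perpSumLine (lam D) := by
  obtain ⟨M, rfl⟩ : ∃ M : ℤ, D = 1 - 4 * M := ⟨(1 - D) / 4, by omega⟩
  obtain ⟨a, b, c, rfl⟩ := hx
  refine ⟨2 * a + b + 2 * M * c, ?_⟩
  have hcomb : !![(b : ℚ) / 2, (c : ℚ); -(a : ℚ), -(b : ℚ) / 2] - (2 * a + b + 2 * M * c) • x0 =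
      (-(a + M * c)) • perpBasis₁ + c • perpBasis₂ M := by
    ext i j
    fin_cases i <;> fin_cases j <;> simp [x0, perpBasis₁, perpBasis₂] <;> ring
  rw [hcomb]
  exact add_mem (zsmul_mem (perpBasis₁_mem M) _) (zsmul_mem (perpBasis₂_mem M) _)

theorem memL_and_mem_span_lam_iff {D : ℤ} (hD : D % 4 = 1) (x : Matrix (Fin 2) (Fin 2) ℚ) :
    (memL x ∧ ∃ t : ℚ, x = t • lam D) ↔ ∃ k : ℤ, x = (k : ℚ) • ((2 : ℚ) • lam D) := by
  obtain ⟨M, rfl⟩ : ∃ M : ℤ, D = 1 - 4 * M := ⟨(1 - D) / 4, by omega⟩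
  rw [lam_one_sub_four_mul]
  constructor
  · rintro ⟨⟨a, b, c, rfl⟩, t, ht⟩
    have hb : (b : ℚ) = t / 2 := by simpa [div_eq_mul_inv] using congrFun (congrFun ht 0) 0
    exact ⟨b, by rw [ht, smul_smul, hb]; ring_nf⟩
  · rintro ⟨k, rfl⟩
    refine ⟨⟨-(2 * k * M), k, -(2 * k), ?_⟩, 2 * k, by rw [smul_smul, mul_comm]⟩
    ext i j
    fin_cases i <;> fin_cases j <;> simp <;> ring

end OddDiscriminant

theorem stmt11_general (D : ℤ) (hD1 : D % 4 = 1)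
    (lamD x₀ : Matrix (Fin 2) (Fin 2) ℚ)
    (hlamD : lamD = !![(1 : ℚ) / 2, -1; (1 - (D : ℚ)) / 4, -(1 : ℚ) / 2])
    (hx₀def : x₀ = !![(1 : ℚ) / 2, 0; 0, -(1 : ℚ) / 2])
    (L'grp PNgrp : AddSubgroup (Matrix (Fin 2) (Fin 2) ℚ))
    (hL' : ∀ x, x ∈ L'grp ↔ memL' x)
    (hPN : PNgrp = AddSubgroup.closure
      {x | (memL x ∧ Matrix.trace (x * lamD) = 0) ∨
        ∃ k : ℤ, x = (k : ℚ) • ((2 : ℚ) • lamD)})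
    (hx₀ : x₀ ∈ L'grp) :
    (∀ x : Matrix (Fin 2) (Fin 2) ℚ,
      (memL x ∧ ∃ t : ℚ, x = t • lamD) ↔ ∃ k : ℤ, x = (k : ℚ) • ((2 : ℚ) • lamD)) ∧
    Nat.card (L'grp ⧸ PNgrp.addSubgroupOf L'grp) = 2 * D.natAbs ∧
    (∀ q : L'grp ⧸ PNgrp.addSubgroupOf L'grp,
      ∃ n : ℤ, n • (QuotientAddGroup.mk (⟨x₀, hx₀⟩ : L'grp)) = q) ∧
    Matrix.trace ((x₀ - (D : ℚ)⁻¹ • lamD) * lamD) = 0 := by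
  open OddDiscriminant in
  obtain rfl : lamD = lam D := hlamD
  obtain rfl : x₀ = x0 := hx₀def
  obtain rfl : PNgrp = perpSumLine (lam D) := hPN
  have hgen (q : L'grp ⧸ (perpSumLine (lam D)).addSubgroupOf L'grp) :
      q ∈ AddSubgroup.zmultiples (QuotientAddGroup.mk ⟨x0, hx₀⟩ : _ ⧸ _) := by
    refine QuotientAddGroup.mem_zmultiples_mk_of_forall_exists_sub_zsmul_mem (fun y => ?_) q
    obtain ⟨n, hn⟩ := exists_sub_zsmul_x0_mem hD1 ((hL' y).mp y.2)
    exact ⟨n, by simpa [AddSubgroup.mem_addSubgroupOf] using hn⟩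
  refine ⟨memL_and_mem_span_lam_iff hD1,
    QuotientAddGroup.card_eq_of_zsmul_mem_iff hgen fun n => ?_,
    fun q => AddSubgroup.mem_zmultiples_iff.mp (hgen q),
    trace_sub_inv_smul_mul_lam (by exact_mod_cast (by omega : D ≠ 0))⟩
  rw [AddSubgroup.mem_addSubgroupOf, AddSubgroup.coe_zsmul, zsmul_x0_mem_iff hD1,
    ← Int.natAbs_dvd, Int.natAbs_mul]
  rfl

/-- for an odd fundamental discriminant `D < 0`, with
`λ_D = [[1/2,−1],[(1−D)/4,−1/2]]`, `P = L ∩ λ_D^⊥` and `N = L ∩ ℚλ_D = ℤ·2λ_D`,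
the quotient `L'/(P ⊕ N)` is cyclic of order `2|D|`, generated by the image of
`x₀ = [[1/2,0],[0,−1/2]]`; moreover `x₀ − (1/D)λ_D` is orthogonal to `λ_D`. -/
theorem stmt11 (D : ℤ) (hDneg : D < 0) (hD1 : D % 4 = 1) (hDsf : Squarefree D)
    (lamD x₀ : Matrix (Fin 2) (Fin 2) ℚ)
    (hlamD : lamD = !![(1 : ℚ) / 2, -1; (1 - (D : ℚ)) / 4, -(1 : ℚ) / 2])
    (hx₀def : x₀ = !![(1 : ℚ) / 2, 0; 0, -(1 : ℚ) / 2])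
    (L'grp PNgrp : AddSubgroup (Matrix (Fin 2) (Fin 2) ℚ))
    (hL' : ∀ x, x ∈ L'grp ↔ memL' x)
    (hPN : PNgrp = AddSubgroup.closure
      {x | (memL x ∧ Matrix.trace (x * lamD) = 0) ∨
        ∃ k : ℤ, x = (k : ℚ) • ((2 : ℚ) • lamD)})
    (hx₀ : x₀ ∈ L'grp) :
    (∀ x : Matrix (Fin 2) (Fin 2) ℚ,
      (memL x ∧ ∃ t : ℚ, x = t • lamD) ↔ ∃ k : ℤ, x = (k : ℚ) • ((2 : ℚ) • lamD)) ∧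
    Nat.card (L'grp ⧸ PNgrp.addSubgroupOf L'grp) = 2 * D.natAbs ∧
    (∀ q : L'grp ⧸ PNgrp.addSubgroupOf L'grp,
      ∃ n : ℤ, n • (QuotientAddGroup.mk (⟨x₀, hx₀⟩ : L'grp)) = q) ∧
    Matrix.trace ((x₀ - (D : ℚ)⁻¹ • lamD) * lamD) = 0 :=
  stmt11_general D hD1 lamD x₀ hlamD hx₀def L'grp PNgrp hL' hPN hx₀
end

section
/- Let D < 0 with D ≡ 1 (mod 4). In the lattice M₂(ℤ) of integral 2×2 matrices with quadratic form Q(X) = −det(X), set u₁ = [[−1, 1], [1, 0]], u₂ = [[(1−D)/4, 0], [0, −1]], v₁ = [[0, 1], [−1, 0]], v₂ = [[(1−D)/4, −1], [0, 1]]. Then: (i) for all x, y ∈ ℤ, Q(x·u₁ + y·u₂) = x² − x·y + ((1−D)/4)·y², a positive definite binary quadratic form of discriminant D, and Q(x·v₁ + y·v₂) = −(x² − x·y + ((1−D)/4)·y²); (ii) each of u₁, u₂ is orthogonal to each of v₁, v₂ with respect to the bilinear form B(X,Y) = Q(X+Y) − Q(X) − Q(Y) of Q; (iii) u₁, u₂,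 v₁, v₂ are ℤ-linearly independent. Hence the orthogonal direct sum P ⊕ P⁻, where P = (ℤ², x² − xy + ((1−D)/4)y²) and P⁻ is the same module with the negated form, embeds isometrically into (M₂(ℤ), −det). -/
open Matrix

/-- the explicit embedding of `P ⊕ P⁻` into `(M₂(ℤ), −det)`, where
`P = (ℤ², x² − xy + ((1−D)/4)y²)`: the vectors `u₁, u₂` span a copy of `P`, the vectors
`v₁, v₂` span a copy of `P⁻`, the two planes are orthogonal, the four vectors are
`ℤ`-linearly independent, and the total map is an isometric embedding. -/
theorem stmt12 (D : ℤ) (hDneg : D < 0) (hD1 : D % 4 = 1)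
    (u₁ u₂ v₁ v₂ : Matrix (Fin 2) (Fin 2) ℤ)
    (hu₁ : u₁ = !![-1, 1; 1, 0]) (hu₂ : u₂ = !![(1 - D) / 4, 0; 0, -1])
    (hv₁ : v₁ = !![0, 1; -1, 0]) (hv₂ : v₂ = !![(1 - D) / 4, -1; 0, 1]) :
    -- (i) the quadratic form on the two sublattices
    (∀ x y : ℤ,
      -(x • u₁ + y • u₂).det = x ^ 2 - x * y + ((1 - D) / 4) * y ^ 2 ∧
      -(x • v₁ + y • v₂).det = -(x ^ 2 - x * y + ((1 - D) / 4) * y ^ 2)) ∧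
    -- the binary form is positive definite of discriminant D
    ((-1 : ℤ) ^ 2 - 4 * 1 * ((1 - D) / 4) = D) ∧
    (∀ x y : ℤ, ¬(x = 0 ∧ y = 0) → 0 < x ^ 2 - x * y + ((1 - D) / 4) * y ^ 2) ∧
    -- (ii) orthogonality of the u-plane and the v-plane for B(X,Y) = Q(X+Y)−Q(X)−Q(Y)
    (∀ X Y : Matrix (Fin 2) (Fin 2) ℤ, (X = u₁ ∨ X = u₂) → (Y = v₁ ∨ Y = v₂) →
      -((X + Y).det) - (-(X.det)) - (-(Y.det)) = 0) ∧
    -- (iii) ℤ-linear independence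
    (∀ a b c d : ℤ, a • u₁ + b • u₂ + c • v₁ + d • v₂ = 0 →
      a = 0 ∧ b = 0 ∧ c = 0 ∧ d = 0) ∧
    -- the resulting embedding of P ⊕ P⁻ is isometric
    (∀ x y z w : ℤ,
      -(x • u₁ + y • u₂ + z • v₁ + w • v₂).det =
        (x ^ 2 - x * y + ((1 - D) / 4) * y ^ 2)
          - (z ^ 2 - z * w + ((1 - D) / 4) * w ^ 2)) := by
  have hdvd : (4 : ℤ) ∣ (1 - D) := by omega
  obtain ⟨k, hk⟩ := hdvd
  have hkd : (1 - D) / 4 = k := by omega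
  have hk1 : 1 ≤ k := by omega
  subst hu₁ hu₂ hv₁ hv₂
  rw [hkd]
  refine ⟨?_, by omega, ?_, ?_, ?_, ?_⟩
  · intro x y
    constructor <;> (simp [Matrix.det_fin_two]; ring)
  · intro x y h
    rcases eq_or_ne y 0 with hy | hy
    · have hx : x ≠ 0 := by tauto
      have h1 : 1 ≤ x ^ 2 := by rcases hx.lt_or_gt with h' | h' <;> nlinarith
      subst hy; nlinarith
    · have h1 : 1 ≤ y ^ 2 := by rcases hy.lt_or_gt with h' | h' <;> nlinarith
      nlinarith [sq_nonneg (2*x - y)]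
  · rintro X Y (rfl | rfl) (rfl | rfl) <;> simp [Matrix.det_fin_two] <;> ring
  · intro a b c d h
    have h00 := congrFun (congrFun h 0) 0
    have h01 := congrFun (congrFun h 0) 1
    have h10 := congrFun (congrFun h 1) 0
    have h11 := congrFun (congrFun h 1) 1
    simp [Matrix.add_apply, Matrix.smul_apply] at h00 h01 h10 h11
    have hb : b = 2 * a := by omega
    have hd : d = 2 * a := by omega
    rw [hb, hd] at h00
    have ha : a * (4 * k - 1) = 0 := by linear_combination h00
    have ha0 : a = 0 := by
      rcases mul_eq_zero.mp ha with h' | h'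
      · exact h'
      · omega
    refine ⟨ha0, by omega, by omega, by omega⟩
  · intro x y z w
    simp [Matrix.det_fin_two]
    ring
end
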